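/- arXiv:2309.06711 — 2 statements merged into one kernel-verified Lean document; each statement's English description precedes it below -/
import Mathlib

section
/- Let λ, σ, ν, θ > 0, τ > 0, h > 0, t ≥ τ, and ε ∈ ℝ. Let X¹, X², Z¹, Z² be four centered, square-integrable real processes indexed by [0,∞), pairwise uncorrelated (Cov between evaluations of any two distinct processes is 0 at all times), with Cov(X^k_s, X^k_t) = (σ²/(2λ))·exp(−λ|s−t|) and Cov(Z^k_s, Z^k_t) = min(s,t) for k = 1,2. For k = 1,2 define the h-horizon return r^k(ε) = θ(X^k_{t+h} − X^k_t) + ν(Z^k_{t+h} − Z^k_t) + ε·Σ_{j=1,2} [ θ((X^j_{t+h} − X^j_t) − (X^j_{t+h−τ} − X^j_{t−τ})) + ν((Z^j_{t+h} − Z^j_t) − (Z^j_{t+h−τ} − Z^j_{t−τ})) ]. Then Cov(r¹(ε), r²(ε)) = 2εA + ε²B, where A = (σ²θ²/λ)·(1 − e^{−λh} − e^{−λτ} + ½e^{−λ(h+τ)} + ½e^{−λ|h−τ|}) + ν²·min(h, τ), and B = Var(V¹ + V²) with V^j = θ((X^j_{t+h} − X^j_t) − (X^j_{t+h−τ} −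 X^j_{t−τ})) + ν((Z^j_{t+h} − Z^j_t) − (Z^j_{t+h−τ} − Z^j_{t−τ})). -/
open MeasureTheory

/-- Covariance of two real random variables. -/
noncomputable def cov {Ω : Type*} [MeasurableSpace Ω] (μ : Measure Ω) (X Y : Ω → ℝ) : ℝ :=
  (∫ ω, X ω * Y ω ∂μ) - (∫ ω, X ω ∂μ) * (∫ ω, Y ω ∂μ)

/-- The momentum term `V = θ((X_{t+h} − X_t) − (X_{t+h−τ} − X_{t−τ}))
  + ν((Z_{t+h} − Z_t) − (Z_{t+h−τ} − Z_{t−τ}))` of a process pair `(X, Z)`. -/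
def momTerm {Ω : Type*} (th nu τ h t : ℝ) (X Z : ℝ → Ω → ℝ) : Ω → ℝ :=
  fun ω => th * ((X (t + h) ω - X t ω) - (X (t + h - τ) ω - X (t - τ) ω))
    + nu * ((Z (t + h) ω - Z t ω) - (Z (t + h - τ) ω - Z (t - τ) ω))

/-- The `h`-horizon return of asset `k` (with own noises `X`, `Z`) to first order in the
coupling `ε`:
`r = θ(X_{t+h} − X_t) + ν(Z_{t+h} − Z_t) + ε(V¹ + V²)`. -/
def ret {Ω : Type*} (th nu eps τ h t : ℝ) (X Z X1 X2 Z1 Z2 : ℝ → Ω → ℝ) : Ω → ℝ :=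
  fun ω => th * (X (t + h) ω - X t ω) + nu * (Z (t + h) ω - Z t ω)
    + eps * (momTerm th nu τ h t X1 Z1 ω + momTerm th nu τ h t X2 Z2 ω)

/-!
Write `B_s` for the `h`-return from time `s` of the uncoupled price `θX + νZ` of one asset. The
momentum term is `V = B_t − B_{t−τ}`, and `r^k = B^k_t + ε(V¹ + V²)`, so bilinearity gives
`Cov(r¹, r²) = Cov(B¹_t, B²_t) + ε(Cov(B¹_t, V) + Cov(V, B²_t)) + ε² Var(V)`.
Terms mixing the two assets vanish. The covariance of two `h`-returns of the same asset is the
double increment of the covariance kernel over the two windows, which depends only on the lag `d`: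
`σ²/(2λ)(2e^{−λ|d|} − e^{−λ|d+h|} − e^{−λ|d−h|})` for the Ornstein–Uhlenbeck part and the
overlap `(h − |d|)⁺` of the two windows for the Brownian part. Both brackets are then
`R(0) − R(τ)` for this autocovariance `R`, which is the announced `A`.
-/

open ProbabilityTheory Real

section Covariance

variable {Ω : Type*} [MeasurableSpace Ω] {μ : Measure Ω}

lemma cov_comm (f g : Ω → ℝ) : cov μ f g = cov μ g f := by
  simp only [cov, mul_comm]

lemma cov_const_mul_left (c : ℝ) (f g : Ω → ℝ) :
    cov μ (fun ω => c * f ω) g = c * cov μ f g := by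
  simp only [cov, mul_assoc, integral_const_mul]
  ring

lemma cov_const_mul_right (c : ℝ) (f g : Ω → ℝ) :
    cov μ f (fun ω => c * g ω) = c * cov μ f g := by
  rw [cov_comm, cov_const_mul_left, cov_comm]

variable [IsProbabilityMeasure μ] {f g k l : Ω → ℝ}

lemma cov_eq_covariance (hf : MemLp f 2 μ) (hg : MemLp g 2 μ) : cov μ f g = cov[f, g; μ] := by
  rw [covariance_eq_sub hf hg]
  rfl

lemma cov_add_left (hf : MemLp f 2 μ) (hg : MemLp g 2 μ) (hk : MemLp k 2 μ) :
    cov μ (fun ω => f ω + g ω) k = cov μ f k + cov μ g k := by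
  rw [cov_eq_covariance (f := fun ω => f ω + g ω) (hf.add hg) hk, cov_eq_covariance hf hk,
    cov_eq_covariance hg hk]
  exact covariance_add_left hf hg hk

lemma cov_add_right (hf : MemLp f 2 μ) (hg : MemLp g 2 μ) (hk : MemLp k 2 μ) :
    cov μ k (fun ω => f ω + g ω) = cov μ k f + cov μ k g := by
  rw [cov_comm, cov_add_left hf hg hk, cov_comm f, cov_comm g]

lemma cov_sub_left (hf : MemLp f 2 μ) (hg : MemLp g 2 μ) (hk : MemLp k 2 μ) :
    cov μ (fun ω => f ω - g ω) k = cov μ f k - cov μ g k := by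
  rw [cov_eq_covariance (f := fun ω => f ω - g ω) (hf.sub hg) hk, cov_eq_covariance hf hk,
    cov_eq_covariance hg hk]
  exact covariance_sub_left hf hg hk

lemma cov_sub_right (hf : MemLp f 2 μ) (hg : MemLp g 2 μ) (hk : MemLp k 2 μ) :
    cov μ k (fun ω => f ω - g ω) = cov μ k f - cov μ k g := by
  rw [cov_comm, cov_sub_left hf hg hk, cov_comm f, cov_comm g]

lemma cov_sub_sub (hf : MemLp f 2 μ) (hg : MemLp g 2 μ) (hk : MemLp k 2 μ) (hl : MemLp l 2 μ) :
    cov μ (fun ω => f ω - g ω) (fun ω => k ω - l ω)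
      = cov μ f k - cov μ f l - cov μ g k + cov μ g l := by
  rw [cov_sub_left (k := fun ω => k ω - l ω) hf hg (hk.sub hl), cov_sub_right hk hl hf,
    cov_sub_right hk hl hg]
  ring

lemma cov_add_mul_add_mul (c : ℝ) (hf : MemLp f 2 μ) (hg : MemLp g 2 μ) (hk : MemLp k 2 μ) :
    cov μ (fun ω => f ω + c * k ω) (fun ω => g ω + c * k ω)
      = cov μ f g + c * (cov μ f k + cov μ k g) + c ^ 2 * cov μ k k := by
  rw [cov_add_left (k := fun ω => g ω + c * k ω) hf (hk.const_mul c) (hg.add (hk.const_mul c)),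
    cov_add_right hg (hk.const_mul c) hf, cov_add_right hg (hk.const_mul c) (hk.const_mul c),
    cov_const_mul_left, cov_const_mul_left, cov_const_mul_right, cov_const_mul_right]
  ring

lemma cov_mul_add_mul_mul_add_mul (a b c d : ℝ) (hf : MemLp f 2 μ) (hg : MemLp g 2 μ)
    (hk : MemLp k 2 μ) (hl : MemLp l 2 μ) :
    cov μ (fun ω => a * f ω + b * g ω) (fun ω => c * k ω + d * l ω)
      = a * c * cov μ f k + a * d * cov μ f l + b * c * cov μ g k + b * d * cov μ g l := by
  rw [cov_add_left (k := fun ω => c * k ω + d * l ω) (hf.const_mul a) (hg.const_mul b)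
      ((hk.const_mul c).add (hl.const_mul d)),
    cov_add_right (hk.const_mul c) (hl.const_mul d) (hf.const_mul a),
    cov_add_right (hk.const_mul c) (hl.const_mul d) (hg.const_mul b)]
  simp only [cov_const_mul_left, cov_const_mul_right]
  ring

end Covariance

def rectIncr (K : ℝ → ℝ → ℝ) (h s u : ℝ) : ℝ :=
  K (s + h) (u + h) - K (s + h) u - K s (u + h) + K s u

lemma rectIncr_congr {K K' : ℝ → ℝ → ℝ} {h s u : ℝ} (hK : ∀ a b, 0 ≤ a → 0 ≤ b → K a b = K' a b)
    (hh : 0 ≤ h) (hs : 0 ≤ s) (hu : 0 ≤ u) : rectIncr K h s u = rectIncr K' h s u := by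
  have hsh : 0 ≤ s + h := add_nonneg hs hh
  have huh : 0 ≤ u + h := add_nonneg hu hh
  simp only [rectIncr, hK _ _ hsh huh, hK _ _ hsh hu, hK _ _ hs huh, hK _ _ hs hu]

lemma rectIncr_zero (h s u : ℝ) : rectIncr (fun _ _ => 0) h s u = 0 := by
  simp [rectIncr]

lemma rectIncr_exp_abs_sub (c lam h s u : ℝ) :
    rectIncr (fun a b => c * exp (-(lam * |a - b|))) h s u
      = c * (2 * exp (-(lam * |s - u|)) - exp (-(lam * |s - u + h|))
          - exp (-(lam * |s - u - h|))) := by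
  simp only [rectIncr]
  rw [show s + h - (u + h) = s - u by ring, show s + h - u = s - u + h by ring,
    show s - (u + h) = s - u - h by ring]
  ring

lemma rectIncr_min {h : ℝ} (hh : 0 ≤ h) (s u : ℝ) :
    rectIncr min h s u = max 0 (h - |s - u|) := by
  simp only [rectIncr, min_def, max_def, abs_eq_max_neg]
  split_ifs <;> linarith

section Returns

variable {Ω : Type*} {X Z X' Z' : ℝ → Ω → ℝ} {th nu h s u : ℝ}

/-- The `h`-horizon return from time `s` of the uncoupled price `θX + νZ`. -/
def baseReturn (th nu h s : ℝ) (X Z : ℝ → Ω → ℝ) : Ω → ℝ :=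
  fun ω => th * (X (s + h) ω - X s ω) + nu * (Z (s + h) ω - Z s ω)

lemma momTerm_eq_baseReturn_sub (th nu τ h t : ℝ) (X Z : ℝ → Ω → ℝ) :
    momTerm th nu τ h t X Z
      = fun ω => baseReturn th nu h t X Z ω - baseReturn th nu h (t - τ) X Z ω := by
  funext ω
  simp only [momTerm, baseReturn, sub_add_eq_add_sub]
  ring

lemma ret_eq (th nu eps τ h t : ℝ) (X Z X1 X2 Z1 Z2 : ℝ → Ω → ℝ) :
    ret th nu eps τ h t X Z X1 X2 Z1 Z2 = fun ω => baseReturn th nu h t X Z ω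
      + eps * (momTerm th nu τ h t X1 Z1 ω + momTerm th nu τ h t X2 Z2 ω) :=
  rfl

variable [MeasurableSpace Ω] {μ : Measure Ω}

lemma memLp_baseReturn (hX : ∀ r, 0 ≤ r → MemLp (X r) 2 μ) (hZ : ∀ r, 0 ≤ r → MemLp (Z r) 2 μ)
    (hh : 0 ≤ h) (hs : 0 ≤ s) : MemLp (baseReturn th nu h s X Z) 2 μ :=
  (((hX _ (add_nonneg hs hh)).sub (hX s hs)).const_mul th).add
    (((hZ _ (add_nonneg hs hh)).sub (hZ s hs)).const_mul nu)

lemma memLp_momTerm (hX : ∀ r, 0 ≤ r → MemLp (X r) 2 μ) (hZ : ∀ r, 0 ≤ r → MemLp (Z r) 2 μ)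
    {τ t : ℝ} (hh : 0 ≤ h) (hτ : 0 ≤ τ) (ht : τ ≤ t) : MemLp (momTerm th nu τ h t X Z) 2 μ := by
  rw [momTerm_eq_baseReturn_sub]
  exact (memLp_baseReturn hX hZ hh (hτ.trans ht)).sub
    (memLp_baseReturn hX hZ hh (sub_nonneg.2 ht))

variable [IsProbabilityMeasure μ]

lemma cov_baseReturn (hX : ∀ r, 0 ≤ r → MemLp (X r) 2 μ) (hZ : ∀ r, 0 ≤ r → MemLp (Z r) 2 μ)
    (hX' : ∀ r, 0 ≤ r → MemLp (X' r) 2 μ) (hZ' : ∀ r, 0 ≤ r → MemLp (Z' r) 2 μ)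
    (th' nu' : ℝ) (hh : 0 ≤ h) (hs : 0 ≤ s) (hu : 0 ≤ u) :
    cov μ (baseReturn th nu h s X Z) (baseReturn th' nu' h u X' Z')
      = th * th' * rectIncr (fun a b => cov μ (X a) (X' b)) h s u
        + th * nu' * rectIncr (fun a b => cov μ (X a) (Z' b)) h s u
        + nu * th' * rectIncr (fun a b => cov μ (Z a) (X' b)) h s u
        + nu * nu' * rectIncr (fun a b => cov μ (Z a) (Z' b)) h s u := by
  have hsh : 0 ≤ s + h := add_nonneg hs hh
  have huh : 0 ≤ u + h := add_nonneg hu hh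
  have dX : MemLp (fun ω => X (s + h) ω - X s ω) 2 μ := (hX _ hsh).sub (hX s hs)
  have dZ : MemLp (fun ω => Z (s + h) ω - Z s ω) 2 μ := (hZ _ hsh).sub (hZ s hs)
  have dX' : MemLp (fun ω => X' (u + h) ω - X' u ω) 2 μ := (hX' _ huh).sub (hX' u hu)
  have dZ' : MemLp (fun ω => Z' (u + h) ω - Z' u ω) 2 μ := (hZ' _ huh).sub (hZ' u hu)
  unfold baseReturn
  rw [cov_mul_add_mul_mul_add_mul th nu th' nu' dX dZ dX' dZ',
    cov_sub_sub (hX _ hsh) (hX s hs) (hX' _ huh) (hX' u hu),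
    cov_sub_sub (hX _ hsh) (hX s hs) (hZ' _ huh) (hZ' u hu),
    cov_sub_sub (hZ _ hsh) (hZ s hs) (hX' _ huh) (hX' u hu),
    cov_sub_sub (hZ _ hsh) (hZ s hs) (hZ' _ huh) (hZ' u hu)]
  rfl

lemma cov_baseReturn_eq_zero (hX : ∀ r, 0 ≤ r → MemLp (X r) 2 μ)
    (hZ : ∀ r, 0 ≤ r → MemLp (Z r) 2 μ) (hX' : ∀ r, 0 ≤ r → MemLp (X' r) 2 μ)
    (hZ' : ∀ r, 0 ≤ r → MemLp (Z' r) 2 μ)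
    (hXX' : ∀ a b, 0 ≤ a → 0 ≤ b → cov μ (X a) (X' b) = 0)
    (hXZ' : ∀ a b, 0 ≤ a → 0 ≤ b → cov μ (X a) (Z' b) = 0)
    (hZX' : ∀ a b, 0 ≤ a → 0 ≤ b → cov μ (Z a) (X' b) = 0)
    (hZZ' : ∀ a b, 0 ≤ a → 0 ≤ b → cov μ (Z a) (Z' b) = 0)
    (th' nu' : ℝ) (hh : 0 ≤ h) (hs : 0 ≤ s) (hu : 0 ≤ u) :
    cov μ (baseReturn th nu h s X Z) (baseReturn th' nu' h u X' Z') = 0 := by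
  rw [cov_baseReturn hX hZ hX' hZ' th' nu' hh hs hu, rectIncr_congr hXX' hh hs hu,
    rectIncr_congr hXZ' hh hs hu, rectIncr_congr hZX' hh hs hu, rectIncr_congr hZZ' hh hs hu,
    rectIncr_zero]
  ring

lemma cov_momTerm_right {f : Ω → ℝ} (hf : MemLp f 2 μ) (hX : ∀ r, 0 ≤ r → MemLp (X r) 2 μ)
    (hZ : ∀ r, 0 ≤ r → MemLp (Z r) 2 μ) {τ t : ℝ} (hh : 0 ≤ h) (hτ : 0 ≤ τ) (ht : τ ≤ t) :
    cov μ f (momTerm th nu τ h t X Z)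
      = cov μ f (baseReturn th nu h t X Z) - cov μ f (baseReturn th nu h (t - τ) X Z) := by
  rw [momTerm_eq_baseReturn_sub, cov_sub_right (memLp_baseReturn hX hZ hh (hτ.trans ht))
    (memLp_baseReturn hX hZ hh (sub_nonneg.2 ht)) hf]

lemma cov_momTerm_left {f : Ω → ℝ} (hf : MemLp f 2 μ) (hX : ∀ r, 0 ≤ r → MemLp (X r) 2 μ)
    (hZ : ∀ r, 0 ≤ r → MemLp (Z r) 2 μ) {τ t : ℝ} (hh : 0 ≤ h) (hτ : 0 ≤ τ) (ht : τ ≤ t) :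
    cov μ (momTerm th nu τ h t X Z) f
      = cov μ (baseReturn th nu h t X Z) f - cov μ (baseReturn th nu h (t - τ) X Z) f := by
  rw [cov_comm, cov_momTerm_right hf hX hZ hh hτ ht, cov_comm f, cov_comm f]

/-- The autocovariance at lag `d` of the `h`-horizon returns of the uncoupled price `θX + νZ`, for
`X` a stationary Ornstein–Uhlenbeck process and `Z` an independent Brownian motion. -/
noncomputable def returnAutocov (lam sig th nu h d : ℝ) : ℝ :=
  th ^ 2 * (sig ^ 2 / (2 * lam)) *
      (2 * exp (-(lam * |d|)) - exp (-(lam * |d + h|)) - exp (-(lam * |d - h|)))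
    + nu ^ 2 * max 0 (h - |d|)

lemma cov_baseReturn_self {lam sig : ℝ} (hX : ∀ r, 0 ≤ r → MemLp (X r) 2 μ)
    (hZ : ∀ r, 0 ≤ r → MemLp (Z r) 2 μ)
    (hXX : ∀ a b, 0 ≤ a → 0 ≤ b →
      cov μ (X a) (X b) = sig ^ 2 / (2 * lam) * exp (-(lam * |a - b|)))
    (hZZ : ∀ a b, 0 ≤ a → 0 ≤ b → cov μ (Z a) (Z b) = min a b)
    (hXZ : ∀ a b, 0 ≤ a → 0 ≤ b → cov μ (X a) (Z b) = 0)
    (hh : 0 ≤ h) (hs : 0 ≤ s) (hu : 0 ≤ u) :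
    cov μ (baseReturn th nu h s X Z) (baseReturn th nu h u X Z)
      = returnAutocov lam sig th nu h (s - u) := by
  have hZX : ∀ a b, 0 ≤ a → 0 ≤ b → cov μ (Z a) (X b) = 0 :=
    fun a b ha hb => (cov_comm _ _).trans (hXZ b a hb ha)
  rw [cov_baseReturn hX hZ hX hZ th nu hh hs hu, rectIncr_congr hXX hh hs hu,
    rectIncr_congr hZZ hh hs hu, rectIncr_congr hXZ hh hs hu, rectIncr_congr hZX hh hs hu,
    rectIncr_zero, rectIncr_exp_abs_sub, rectIncr_min hh, returnAutocov]
  ring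

end Returns

lemma returnAutocov_neg (lam sig th nu h d : ℝ) :
    returnAutocov lam sig th nu h (-d) = returnAutocov lam sig th nu h d := by
  rw [returnAutocov, returnAutocov, abs_neg, show -d + h = -(d - h) by ring,
    show -d - h = -(d + h) by ring, abs_neg, abs_neg]
  ring

lemma returnAutocov_zero_sub {h τ : ℝ} (hh : 0 ≤ h) (hτ : 0 ≤ τ) (lam sig th nu : ℝ) :
    returnAutocov lam sig th nu h 0 - returnAutocov lam sig th nu h τ
      = sig ^ 2 * th ^ 2 / lam *
          (1 - exp (-(lam * h)) - exp (-(lam * τ)) + (1 / 2) * exp (-(lam * (h + τ)))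
            + (1 / 2) * exp (-(lam * |h - τ|)))
        + nu ^ 2 * min h τ := by
  have hmin : h - max 0 (h - τ) = min h τ := by
    rcases le_total h τ with hhτ | hτh
    · rw [max_eq_left (by linarith), min_eq_left hhτ, sub_zero]
    · rw [max_eq_right (by linarith), min_eq_right hτh]; ring
  rw [returnAutocov, returnAutocov, abs_zero, zero_add, zero_sub, abs_neg, abs_of_nonneg hh,
    abs_of_nonneg hτ, abs_of_nonneg (add_nonneg hτ hh), abs_sub_comm τ h, add_comm τ h,
    sub_zero, max_eq_right hh, ← hmin]
  simp only [mul_zero, neg_zero, exp_zero]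
  ring

theorem cross_covariance_first_order_general {Ω : Type*} [MeasurableSpace Ω] (μ : Measure Ω)
    [IsProbabilityMeasure μ]
    (lam sig nu th τ h t eps : ℝ)
    (hτ : 0 < τ) (hh : 0 < h) (ht : τ ≤ t)
    (X1 X2 Z1 Z2 : ℝ → Ω → ℝ)
    (hX1L2 : ∀ s : ℝ, 0 ≤ s → MemLp (X1 s) 2 μ)
    (hX2L2 : ∀ s : ℝ, 0 ≤ s → MemLp (X2 s) 2 μ)
    (hZ1L2 : ∀ s : ℝ, 0 ≤ s → MemLp (Z1 s) 2 μ)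
    (hZ2L2 : ∀ s : ℝ, 0 ≤ s → MemLp (Z2 s) 2 μ)
    (hX1cov : ∀ s u : ℝ, 0 ≤ s → 0 ≤ u →
      cov μ (X1 s) (X1 u) = sig ^ 2 / (2 * lam) * Real.exp (-(lam * |s - u|)))
    (hX2cov : ∀ s u : ℝ, 0 ≤ s → 0 ≤ u →
      cov μ (X2 s) (X2 u) = sig ^ 2 / (2 * lam) * Real.exp (-(lam * |s - u|)))
    (hZ1cov : ∀ s u : ℝ, 0 ≤ s → 0 ≤ u → cov μ (Z1 s) (Z1 u) = min s u)
    (hZ2cov : ∀ s u : ℝ, 0 ≤ s → 0 ≤ u → cov μ (Z2 s) (Z2 u) = min s u)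
    (hX1X2 : ∀ s u : ℝ, 0 ≤ s → 0 ≤ u → cov μ (X1 s) (X2 u) = 0)
    (hX1Z1 : ∀ s u : ℝ, 0 ≤ s → 0 ≤ u → cov μ (X1 s) (Z1 u) = 0)
    (hX1Z2 : ∀ s u : ℝ, 0 ≤ s → 0 ≤ u → cov μ (X1 s) (Z2 u) = 0)
    (hX2Z1 : ∀ s u : ℝ, 0 ≤ s → 0 ≤ u → cov μ (X2 s) (Z1 u) = 0)
    (hX2Z2 : ∀ s u : ℝ, 0 ≤ s → 0 ≤ u → cov μ (X2 s) (Z2 u) = 0)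
    (hZ1Z2 : ∀ s u : ℝ, 0 ≤ s → 0 ≤ u → cov μ (Z1 s) (Z2 u) = 0) :
    cov μ (ret th nu eps τ h t X1 Z1 X1 X2 Z1 Z2) (ret th nu eps τ h t X2 Z2 X1 X2 Z1 Z2)
      = 2 * eps *
          (sig ^ 2 * th ^ 2 / lam *
              (1 - Real.exp (-(lam * h)) - Real.exp (-(lam * τ))
                + (1 / 2) * Real.exp (-(lam * (h + τ)))
                + (1 / 2) * Real.exp (-(lam * |h - τ|)))
            + nu ^ 2 * min h τ)
        + eps ^ 2 *
          cov μ (fun ω => momTerm th nu τ h t X1 Z1 ω + momTerm th nu τ h t X2 Z2 ω)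
            (fun ω => momTerm th nu τ h t X1 Z1 ω + momTerm th nu τ h t X2 Z2 ω) := by
  have ht₀ : 0 ≤ t := hτ.le.trans ht
  have htτ : 0 ≤ t - τ := sub_nonneg.2 ht
  have hB₁ := memLp_baseReturn (th := th) (nu := nu) hX1L2 hZ1L2 hh.le ht₀
  have hB₂ := memLp_baseReturn (th := th) (nu := nu) hX2L2 hZ2L2 hh.le ht₀
  have hM₁ := memLp_momTerm (th := th) (nu := nu) hX1L2 hZ1L2 hh.le hτ.le ht
  have hM₂ := memLp_momTerm (th := th) (nu := nu) hX2L2 hZ2L2 hh.le hτ.le ht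
  have hM : MemLp (fun ω => momTerm th nu τ h t X1 Z1 ω + momTerm th nu τ h t X2 Z2 ω) 2 μ :=
    hM₁.add hM₂
  have hZ1X2 : ∀ s u : ℝ, 0 ≤ s → 0 ≤ u → cov μ (Z1 s) (X2 u) = 0 :=
    fun s u hs hu => (cov_comm _ _).trans (hX2Z1 u s hu hs)
  have auto₁ {s u : ℝ} (hs : 0 ≤ s) (hu : 0 ≤ u) :=
    cov_baseReturn_self (th := th) (nu := nu) hX1L2 hZ1L2 hX1cov hZ1cov hX1Z1 hh.le hs hu
  have auto₂ {s u : ℝ} (hs : 0 ≤ s) (hu : 0 ≤ u) :=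
    cov_baseReturn_self (th := th) (nu := nu) hX2L2 hZ2L2 hX2cov hZ2cov hX2Z2 hh.le hs hu
  have cross {s u : ℝ} (hs : 0 ≤ s) (hu : 0 ≤ u) :=
    cov_baseReturn_eq_zero (th := th) (nu := nu) hX1L2 hZ1L2 hX2L2 hZ2L2 hX1X2 hX1Z2 hZ1X2
      hZ1Z2 th nu hh.le hs hu
  rw [ret_eq, ret_eq, cov_add_mul_add_mul eps hB₁ hB₂ hM, cov_add_right hM₁ hM₂ hB₁,
    cov_add_left hM₁ hM₂ hB₂, cov_momTerm_right hB₁ hX1L2 hZ1L2 hh.le hτ.le ht,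
    cov_momTerm_right hB₁ hX2L2 hZ2L2 hh.le hτ.le ht,
    cov_momTerm_left hB₂ hX1L2 hZ1L2 hh.le hτ.le ht,
    cov_momTerm_left hB₂ hX2L2 hZ2L2 hh.le hτ.le ht]
  rw [cross ht₀ ht₀, cross ht₀ htτ, cross htτ ht₀, auto₁ ht₀ ht₀, auto₁ ht₀ htτ, auto₂ ht₀ ht₀,
    auto₂ htτ ht₀, sub_self, sub_sub_cancel, sub_sub_cancel_left, returnAutocov_neg,
    returnAutocov_zero_sub hh.le hτ.le]
  ring

/-- Equation (17) of the paper, with exact second-order remainder: in the Gaussian momentum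
model, the cross-covariance of the `h`-horizon returns satisfies
`Cov(r¹(ε), r²(ε)) = 2εA + ε²·Var(V¹ + V²)` with
`A = (σ²θ²/λ)(1 − e^{−λh} − e^{−λτ} + ½e^{−λ(h+τ)} + ½e^{−λ|h−τ|}) + ν²·min(h,τ)`. -/
theorem cross_covariance_first_order {Ω : Type*} [MeasurableSpace Ω] (μ : Measure Ω)
    [IsProbabilityMeasure μ]
    (lam sig nu th τ h t eps : ℝ)
    (hlam : 0 < lam) (hsig : 0 < sig) (hnu : 0 < nu) (hth : 0 < th)
    (hτ : 0 < τ) (hh : 0 < h) (ht : τ ≤ t)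
    (X1 X2 Z1 Z2 : ℝ → Ω → ℝ)
    (hX1L2 : ∀ s : ℝ, 0 ≤ s → MemLp (X1 s) 2 μ)
    (hX2L2 : ∀ s : ℝ, 0 ≤ s → MemLp (X2 s) 2 μ)
    (hZ1L2 : ∀ s : ℝ, 0 ≤ s → MemLp (Z1 s) 2 μ)
    (hZ2L2 : ∀ s : ℝ, 0 ≤ s → MemLp (Z2 s) 2 μ)
    (hX1cent : ∀ s : ℝ, 0 ≤ s → ∫ ω, X1 s ω ∂μ = 0)
    (hX2cent : ∀ s : ℝ, 0 ≤ s → ∫ ω, X2 s ω ∂μ = 0)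
    (hZ1cent : ∀ s : ℝ, 0 ≤ s → ∫ ω, Z1 s ω ∂μ = 0)
    (hZ2cent : ∀ s : ℝ, 0 ≤ s → ∫ ω, Z2 s ω ∂μ = 0)
    (hX1cov : ∀ s u : ℝ, 0 ≤ s → 0 ≤ u →
      cov μ (X1 s) (X1 u) = sig ^ 2 / (2 * lam) * Real.exp (-(lam * |s - u|)))
    (hX2cov : ∀ s u : ℝ, 0 ≤ s → 0 ≤ u →
      cov μ (X2 s) (X2 u) = sig ^ 2 / (2 * lam) * Real.exp (-(lam * |s - u|)))
    (hZ1cov : ∀ s u : ℝ, 0 ≤ s → 0 ≤ u → cov μ (Z1 s) (Z1 u) = min s u)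
    (hZ2cov : ∀ s u : ℝ, 0 ≤ s → 0 ≤ u → cov μ (Z2 s) (Z2 u) = min s u)
    (hX1X2 : ∀ s u : ℝ, 0 ≤ s → 0 ≤ u → cov μ (X1 s) (X2 u) = 0)
    (hX1Z1 : ∀ s u : ℝ, 0 ≤ s → 0 ≤ u → cov μ (X1 s) (Z1 u) = 0)
    (hX1Z2 : ∀ s u : ℝ, 0 ≤ s → 0 ≤ u → cov μ (X1 s) (Z2 u) = 0)
    (hX2Z1 : ∀ s u : ℝ, 0 ≤ s → 0 ≤ u → cov μ (X2 s) (Z1 u) = 0)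
    (hX2Z2 : ∀ s u : ℝ, 0 ≤ s → 0 ≤ u → cov μ (X2 s) (Z2 u) = 0)
    (hZ1Z2 : ∀ s u : ℝ, 0 ≤ s → 0 ≤ u → cov μ (Z1 s) (Z2 u) = 0) :
    cov μ (ret th nu eps τ h t X1 Z1 X1 X2 Z1 Z2) (ret th nu eps τ h t X2 Z2 X1 X2 Z1 Z2)
      = 2 * eps *
          (sig ^ 2 * th ^ 2 / lam *
              (1 - Real.exp (-(lam * h)) - Real.exp (-(lam * τ))
                + (1 / 2) * Real.exp (-(lam * (h + τ)))
                + (1 / 2) * Real.exp (-(lam * |h - τ|)))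
            + nu ^ 2 * min h τ)
        + eps ^ 2 *
          cov μ (fun ω => momTerm th nu τ h t X1 Z1 ω + momTerm th nu τ h t X2 Z2 ω)
            (fun ω => momTerm th nu τ h t X1 Z1 ω + momTerm th nu τ h t X2 Z2 ω) :=
  cross_covariance_first_order_general μ lam sig nu th τ h t eps hτ hh ht X1 X2 Z1 Z2 hX1L2 hX2L2
    hZ1L2 hZ2L2 hX1cov hX2cov hZ1cov hZ2cov hX1X2 hX1Z1 hX1Z2 hX2Z1 hX2Z2 hZ1Z2
end

section
/- Let λ, θ, ξ, τ > 0 and define f : (0,∞) → ℝ by f(h) = [θ²·(1 − e^{−λh} − e^{−λτ} + ½e^{−λ(h+τ)} + ½e^{−λ|h−τ|}) + ξ·min(h,τ)] / [θ²·(1 − e^{−λh}) + ξh]. Then f is differentiable on (0,τ) and on (τ,∞), the one-sided derivatives of f at h = τ both exist, and the left derivative at τ exceeds the right derivative at τ by exactly (θ²λ + ξ)/(θ²·(1 − e^{−λτ}) + ξτ) > 0; in particular, f is not differentiable at h = τ. -/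
/-!
Writing `min h τ = (h + τ - |h - τ|) / 2`, the function is `(S h + g |h - τ|) / D h` with
`S`, `g`, `D` smooth and `D > 0` on `(0, ∞)`. Away from `τ` it is therefore differentiable. At `τ`
the map `h ↦ |h - τ|` has one-sided derivatives `-1` and `1`, so by the quotient rule the
one-sided derivatives of `f` differ by `-2 g'(0) / D τ`, and `g'(0) = -(θ²λ + ξ) / 2`.
-/

open Real Set

theorem HasDerivWithinAt.eq_of_Iio_of_Ioi {f : ℝ → ℝ} {a dL dR : ℝ}
    (hL : HasDerivWithinAt f dL (Iio a) a) (hR : HasDerivWithinAt f dR (Ioi a) a)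
    (hf : DifferentiableAt ℝ f a) : dL = dR :=
  ((uniqueDiffWithinAt_Iio a).eq_deriv _ hL hf.hasDerivAt.hasDerivWithinAt).trans
    ((uniqueDiffWithinAt_Ioi a).eq_deriv _ hR hf.hasDerivAt.hasDerivWithinAt).symm

theorem two_mul_min_eq_add_sub_abs {α : Type*} [Field α] [LinearOrder α] [IsStrictOrderedRing α]
    (a b : α) : 2 * min a b = a + b - |a - b| := by
  linarith [max_sub_min_eq_abs' a b, min_add_max a b]

theorem mul_one_sub_exp_neg_add_mul_pos {c lam xi h : ℝ} (hc : 0 ≤ c) (hlam : 0 ≤ lam)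
    (hxi : 0 < xi) (hh : 0 < h) : 0 < c * (1 - exp (-(lam * h))) + xi * h := by
  have : exp (-(lam * h)) ≤ 1 := exp_le_one_iff.2 (by nlinarith)
  nlinarith

section KinkAtPoint

variable {S g D : ℝ → ℝ} {a : ℝ}

theorem HasDerivAt.hasDerivWithinAt_comp_abs_sub_Iio {g' : ℝ} (hg : HasDerivAt g g' 0) :
    HasDerivWithinAt (fun x => g |x - a|) (-g') (Iio a) a := by
  have h := HasDerivAt.comp_const_sub a a (by rwa [sub_self])
  exact h.hasDerivWithinAt.congr (fun x hx => by rw [abs_of_neg (sub_neg.2 hx), neg_sub])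
    (by simp)

theorem HasDerivAt.hasDerivWithinAt_comp_abs_sub_Ioi {g' : ℝ} (hg : HasDerivAt g g' 0) :
    HasDerivWithinAt (fun x => g |x - a|) g' (Ioi a) a := by
  have h := HasDerivAt.comp_sub_const a a (by rwa [sub_self])
  exact h.hasDerivWithinAt.congr (fun x hx => by rw [abs_of_pos (sub_pos.2 hx)]) (by simp)

theorem differentiableAt_div_comp_abs_sub {x : ℝ} (hS : DifferentiableAt ℝ S x)
    (hg : DifferentiableAt ℝ g |x - a|) (hD : DifferentiableAt ℝ D x) (hDx : D x ≠ 0) (hxa : x ≠ a) :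
    DifferentiableAt ℝ (fun h => (S h + g |h - a|) / D h) x :=
  (hS.add (hg.comp x ((differentiableAt_id.sub_const a).abs (sub_ne_zero.2 hxa)))).div
    hD hDx

theorem exists_hasDerivWithinAt_div_comp_abs_sub {s g' d : ℝ} (hS : HasDerivAt S s a)
    (hg : HasDerivAt g g' 0) (hD : HasDerivAt D d a) (hDa : D a ≠ 0) :
    ∃ dL dR : ℝ, HasDerivWithinAt (fun h => (S h + g |h - a|) / D h) dL (Iio a) a ∧
      HasDerivWithinAt (fun h => (S h + g |h - a|) / D h) dR (Ioi a) a ∧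
      dL - dR = -2 * g' / D a :=
  ⟨_, _, (hS.hasDerivWithinAt.add hg.hasDerivWithinAt_comp_abs_sub_Iio).div hD.hasDerivWithinAt hDa,
    (hS.hasDerivWithinAt.add hg.hasDerivWithinAt_comp_abs_sub_Ioi).div hD.hasDerivWithinAt hDa,
    by field_simp; ring⟩

end KinkAtPoint

theorem kink_at_tau_general (lam th xi τ : ℝ) (hlam : 0 < lam) (hxi : 0 < xi)
    (hτ : 0 < τ) :
    let f : ℝ → ℝ := fun h =>
      (th ^ 2 *
          (1 - Real.exp (-(lam * h)) - Real.exp (-(lam * τ))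
            + (1 / 2) * Real.exp (-(lam * (h + τ)))
            + (1 / 2) * Real.exp (-(lam * |h - τ|)))
        + xi * min h τ)
      / (th ^ 2 * (1 - Real.exp (-(lam * h))) + xi * h)
    (∀ h ∈ Set.Ioo (0 : ℝ) τ, DifferentiableAt ℝ f h) ∧
    (∀ h ∈ Set.Ioi τ, DifferentiableAt ℝ f h) ∧
    (∃ dL dR : ℝ,
      HasDerivWithinAt f dL (Set.Iio τ) τ ∧ HasDerivWithinAt f dR (Set.Ioi τ) τ ∧
      dL - dR = (th ^ 2 * lam + xi) / (th ^ 2 * (1 - Real.exp (-(lam * τ))) + xi * τ)) ∧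
    0 < (th ^ 2 * lam + xi) / (th ^ 2 * (1 - Real.exp (-(lam * τ))) + xi * τ) ∧
    ¬ DifferentiableAt ℝ f τ := by
  intro f
  set S : ℝ → ℝ := fun h => th ^ 2 * (1 - exp (-(lam * h)) - exp (-(lam * τ))
    + 1 / 2 * exp (-(lam * (h + τ)))) + xi * (h + τ) / 2
  set g : ℝ → ℝ := fun u => th ^ 2 / 2 * exp (-(lam * u)) - xi * u / 2
  set D : ℝ → ℝ := fun h => th ^ 2 * (1 - exp (-(lam * h))) + xi * h
  have hf : f = fun h => (S h + g |h - τ|) / D h := by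
    funext h
    simp only [f, S, g, D]
    linear_combination (xi / (th ^ 2 * (1 - exp (-(lam * h))) + xi * h) / 2) *
      two_mul_min_eq_add_sub_abs h τ
  have hS : Differentiable ℝ S := by fun_prop
  have hg : HasDerivAt g (-(th ^ 2 * lam + xi) / 2) 0 := by
    refine ((((hasDerivAt_id' 0).const_mul lam).fun_neg.exp.const_mul (th ^ 2 / 2)).fun_sub
      (((hasDerivAt_id' 0).const_mul xi).div_const 2)).congr_deriv ?_
    simp only [mul_zero, neg_zero, exp_zero]
    ring
  have hD : Differentiable ℝ D := by fun_prop
  have hDpos : ∀ h, 0 < h → 0 < D h := fun h hh =>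
    mul_one_sub_exp_neg_add_mul_pos (sq_nonneg th) hlam.le hxi hh
  have hsmooth : ∀ h, 0 < h → h ≠ τ → DifferentiableAt ℝ f h := fun h hh hne => by
    rw [hf]
    exact differentiableAt_div_comp_abs_sub (hS h) (by fun_prop) (hD h) (hDpos h hh).ne' hne
  obtain ⟨dL, dR, hL, hR, hjump⟩ := exists_hasDerivWithinAt_div_comp_abs_sub
    (hS τ).hasDerivAt hg (hD τ).hasDerivAt (hDpos τ hτ).ne'
  replace hjump : dL - dR = (th ^ 2 * lam + xi) / D τ := by rw [hjump]; ring
  have hpos : 0 < (th ^ 2 * lam + xi) / D τ := by have := hDpos τ hτ; positivity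
  rw [← hf] at hL hR
  refine ⟨fun h hh => hsmooth h hh.1 hh.2.ne, fun h hh => hsmooth h (hτ.trans hh) hh.ne',
    ⟨dL, dR, hL, hR, hjump⟩, hpos, fun hfτ => ?_⟩
  rw [hL.eq_of_Iio_of_Ioi hR hfτ, sub_self] at hjump
  exact hpos.ne hjump

/-- The kink of the scaled cross-correlation function at the momentum window `τ`
(Section 3 of the paper): with
`f(h) = [θ²(1 − e^{−λh} − e^{−λτ} + ½e^{−λ(h+τ)} + ½e^{−λ|h−τ|}) + ξ·min(h,τ)]
  / [θ²(1 − e^{−λh}) + ξh]`,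
`f` is differentiable on `(0,τ)` and on `(τ,∞)`, both one-sided derivatives at `τ` exist,
the left derivative exceeds the right one by exactly
`(θ²λ + ξ)/(θ²(1 − e^{−λτ}) + ξτ) > 0`, and `f` is not differentiable at `τ`. -/
theorem kink_at_tau (lam th xi τ : ℝ) (hlam : 0 < lam) (hth : 0 < th) (hxi : 0 < xi)
    (hτ : 0 < τ) :
    let f : ℝ → ℝ := fun h =>
      (th ^ 2 *
          (1 - Real.exp (-(lam * h)) - Real.exp (-(lam * τ))
            + (1 / 2) * Real.exp (-(lam * (h + τ)))
            + (1 / 2) * Real.exp (-(lam * |h - τ|)))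
        + xi * min h τ)
      / (th ^ 2 * (1 - Real.exp (-(lam * h))) + xi * h)
    (∀ h ∈ Set.Ioo (0 : ℝ) τ, DifferentiableAt ℝ f h) ∧
    (∀ h ∈ Set.Ioi τ, DifferentiableAt ℝ f h) ∧
    (∃ dL dR : ℝ,
      HasDerivWithinAt f dL (Set.Iio τ) τ ∧ HasDerivWithinAt f dR (Set.Ioi τ) τ ∧
      dL - dR = (th ^ 2 * lam + xi) / (th ^ 2 * (1 - Real.exp (-(lam * τ))) + xi * τ)) ∧
    0 < (th ^ 2 * lam + xi) / (th ^ 2 * (1 - Real.exp (-(lam * τ))) + xi * τ) ∧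
    ¬ DifferentiableAt ℝ f τ :=
  kink_at_tau_general lam th xi τ hlam hxi hτ
end
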